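/- arXiv:2004.12271 — 2 statements merged into one kernel-verified Lean document; each statement's English description precedes it below -/
import Mathlib

section
/- For any q ∈ R^{n×n} with q_{⊥K} ≠ 0 and any doubly stochastic matrix ν with ν_min = min_{ij} ν_{ij} > 0, the matrix ν + (ν_min/‖q_{⊥K}‖)·q_{⊥K} is entrywise nonnegative and has all row sums and all column sums at most 1 (i.e., it lies in the closure of the capacity region C). -/
open scoped BigOperators
open Finset

noncomputable section

/-- Frobenius inner product on `n × n` real matrices (as functions). -/
def frob {n : ℕ} (x y : Fin n → Fin n → ℝ) : ℝ := ∑ i, ∑ j, x i j * y i j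

/-- Frobenius norm. -/
def fnorm {n : ℕ} (x : Fin n → Fin n → ℝ) : ℝ := Real.sqrt (frob x x)

/-- The matrix `e^i` whose `i`-th row is all ones and all other entries are zero. -/
def rowMat {n : ℕ} (i : Fin n) : Fin n → Fin n → ℝ := fun a _ => if a = i then 1 else 0

/-- The matrix `ẽ^j` whose `j`-th column is all ones and all other entries are zero. -/
def colMat {n : ℕ} (j : Fin n) : Fin n → Fin n → ℝ := fun _ b => if b = j then 1 else 0

/-- The subspace `S` spanned by the row- and column-indicator matrices. -/
def spanS (n : ℕ) : Submodule ℝ (Fin n → Fin n → ℝ) :=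
  Submodule.span ℝ (Set.range (rowMat (n := n)) ∪ Set.range (colMat (n := n)))

/-- The cone `K = S ∩ ℝ₊^{n×n}`. -/
def coneK (n : ℕ) : Set (Fin n → Fin n → ℝ) :=
  {x | x ∈ spanS n ∧ ∀ i j, 0 ≤ x i j}

/-- `p` is the (Euclidean/Frobenius) projection of `x` onto the set `C`. -/
def IsProjOn {n : ℕ} (C : Set (Fin n → Fin n → ℝ)) (x p : Fin n → Fin n → ℝ) : Prop :=
  p ∈ C ∧ ∀ y ∈ C, fnorm (x - p) ≤ fnorm (x - y)

/-- Doubly stochastic matrix. -/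
def DoublyStoch {n : ℕ} (ν : Fin n → Fin n → ℝ) : Prop :=
  (∀ i j, 0 ≤ ν i j) ∧ (∀ i, ∑ j, ν i j = 1) ∧ (∀ j, ∑ i, ν i j = 1)

/-- The permutation matrix of `σ`. -/
def permMat {n : ℕ} (σ : Equiv.Perm (Fin n)) : Fin n → Fin n → ℝ :=
  fun i j => if σ i = j then 1 else 0

/-- The all-ones matrix. -/
def onesMat (n : ℕ) : Fin n → Fin n → ℝ := fun _ _ => 1

lemma frob_self_nonneg {n : ℕ} (x : Fin n → Fin n → ℝ) : 0 ≤ frob x x := by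
  apply Finset.sum_nonneg; intro i _; apply Finset.sum_nonneg; intro j _
  exact mul_self_nonneg _

lemma sq_entry_le_frob {n : ℕ} (x : Fin n → Fin n → ℝ) (i j : Fin n) :
    x i j * x i j ≤ frob x x := by
  have h1 : x i j * x i j ≤ ∑ b, x i b * x i b :=
    Finset.single_le_sum (f := fun b => x i b * x i b) (fun b _ => mul_self_nonneg _)
      (Finset.mem_univ j)
  refine h1.trans ?_
  exact Finset.single_le_sum (f := fun a => ∑ b, x a b * x a b)
    (fun a _ => Finset.sum_nonneg fun b _ => mul_self_nonneg _) (Finset.mem_univ i)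

lemma abs_entry_le_fnorm {n : ℕ} (x : Fin n → Fin n → ℝ) (i j : Fin n) :
    |x i j| ≤ fnorm x := by
  have := Real.sqrt_le_sqrt (sq_entry_le_frob x i j)
  rwa [Real.sqrt_mul_self_eq_abs] at this

lemma fnorm_pos {n : ℕ} (x : Fin n → Fin n → ℝ) (hx : x ≠ 0) : 0 < fnorm x := by
  have : frob x x ≠ 0 := by
    intro h
    apply hx
    funext i j
    have h1 := sq_entry_le_frob x i j
    rw [h] at h1
    have := mul_self_nonneg (x i j)
    have : x i j * x i j = 0 := le_antisymm h1 this
    simpa [mul_self_eq_zero] using this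
  exact Real.sqrt_pos.mpr (lt_of_le_of_ne (frob_self_nonneg x) (Ne.symm this))

lemma frob_expand {n : ℕ} (x e : Fin n → Fin n → ℝ) (t : ℝ) :
    frob (x - t • e) (x - t • e) = frob x x - 2*t*frob x e + t^2 * frob e e := by
  have h : ∀ i j, (x i j - t * e i j) * (x i j - t * e i j)
      = x i j * x i j - 2*t*(x i j * e i j) + t^2*(e i j * e i j) := by
    intros; ring
  simp only [frob, Pi.sub_apply, Pi.smul_apply, smul_eq_mul, h,
    Finset.sum_add_distrib, Finset.sum_sub_distrib, ← Finset.mul_sum]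

lemma proj_inner_nonpos {n : ℕ} (q p : Fin n → Fin n → ℝ)
    (hproj : IsProjOn (coneK n) q p) (e : Fin n → Fin n → ℝ)
    (he : e ∈ spanS n) (henn : ∀ i j, 0 ≤ e i j) :
    frob (q - p) e ≤ 0 := by
  have key : ∀ t : ℝ, 0 < t → 2*t*frob (q - p) e ≤ t^2 * frob e e := by
    intro t ht
    have hy : p + t • e ∈ coneK n := by
      refine ⟨Submodule.add_mem _ hproj.1.1 (Submodule.smul_mem _ t he), ?_⟩
      intro i j
      have := hproj.1.2 i j
      have := henn i j
      simp only [Pi.add_apply, Pi.smul_apply, smul_eq_mul]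
      nlinarith
    have h1 := hproj.2 _ hy
    have h2 : q - (p + t • e) = (q - p) - t • e := by abel
    rw [h2] at h1
    have h3 : frob (q - p) (q - p) ≤ frob ((q - p) - t • e) ((q - p) - t • e) := by
      have hsq := mul_self_le_mul_self (Real.sqrt_nonneg _) h1
      simp only [fnorm] at hsq
      rwa [Real.mul_self_sqrt (frob_self_nonneg _),
        Real.mul_self_sqrt (frob_self_nonneg _)] at hsq
    rw [frob_expand] at h3
    linarith
  set a := frob (q - p) e with ha
  by_contra hcon
  push_neg at hcon
  have hE : 0 ≤ frob e e := frob_self_nonneg e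
  rcases eq_or_lt_of_le hE with hE0 | hEpos
  · have := key 1 one_pos
    rw [← hE0] at this
    nlinarith
  · set u := a / frob e e with hu
    have hupos : 0 < u := div_pos hcon hEpos
    have huE : u * frob e e = a := div_mul_cancel₀ a (ne_of_gt hEpos)
    have := key u hupos
    nlinarith [mul_pos hupos hupos]

/-- `ν + (ν_min/‖q_⊥K‖)·q_⊥K` lies in the closure of the capacity region. -/
theorem stmt4 (n : ℕ) (q p ν : Fin n → Fin n → ℝ) (νmin : ℝ)
    (hproj : IsProjOn (coneK n) q p) (hne : q - p ≠ 0)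
    (hν : DoublyStoch ν)
    (hmin_le : ∀ i j, νmin ≤ ν i j) (hmin_mem : ∃ i j, ν i j = νmin)
    (hpos : 0 < νmin) :
    (∀ i j, 0 ≤ (ν + (νmin / fnorm (q - p)) • (q - p)) i j) ∧
    (∀ i, ∑ j, (ν + (νmin / fnorm (q - p)) • (q - p)) i j ≤ 1) ∧
    (∀ j, ∑ i, (ν + (νmin / fnorm (q - p)) • (q - p)) i j ≤ 1) := by
  set r := q - p with hr
  have hN : 0 < fnorm r := fnorm_pos r hne
  set c : ℝ := νmin / fnorm r with hc
  have hc0 : 0 ≤ c := le_of_lt (div_pos hpos hN)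
  have hcN : c * fnorm r = νmin := div_mul_cancel₀ νmin (ne_of_gt hN)
  refine ⟨?_, ?_, ?_⟩
  · intro i j
    simp only [Pi.add_apply, Pi.smul_apply, smul_eq_mul]
    have habs := abs_entry_le_fnorm r i j
    have h1 : -(fnorm r) ≤ r i j := neg_le_of_abs_le habs
    have h2 : νmin ≤ ν i j := hmin_le i j
    nlinarith
  · intro i
    have hsum : ∑ j, r i j = frob r (rowMat i) := by
      simp [frob, rowMat, mul_ite, mul_one, mul_zero]
    have hmem : rowMat i ∈ spanS n :=
      Submodule.subset_span (Or.inl ⟨i, rfl⟩)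
    have hnn : ∀ a b, (0:ℝ) ≤ rowMat i a b := by
      intro a b; simp only [rowMat]; split <;> norm_num
    have hle := proj_inner_nonpos q p hproj (rowMat i) hmem hnn
    rw [← hr] at hle
    simp only [Pi.add_apply, Pi.smul_apply, smul_eq_mul, Finset.sum_add_distrib,
      ← Finset.mul_sum, hν.2.1 i, hsum]
    nlinarith [mul_nonneg hc0 (neg_nonneg.mpr hle)]
  · intro j
    have hsum : ∑ i, r i j = frob r (colMat j) := by
      simp [frob, colMat, mul_ite, mul_one, mul_zero]
    have hmem : colMat j ∈ spanS n :=
      Submodule.subset_span (Or.inr ⟨j, rfl⟩)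
    have hnn : ∀ a b, (0:ℝ) ≤ colMat j a b := by
      intro a b; simp only [colMat]; split <;> norm_num
    have hle := proj_inner_nonpos q p hproj (colMat j) hmem hnn
    rw [← hr] at hle
    simp only [Pi.add_apply, Pi.smul_apply, smul_eq_mul, Finset.sum_add_distrib,
      ← Finset.mul_sum, hν.2.2 j, hsum]
    nlinarith [mul_nonneg hc0 (neg_nonneg.mpr hle)]
end
end

section
/- Under power-of-2 scheduling, where two permutation matrices s₁, s₂ are sampled independently and uniformly at random and the one with larger weight ⟨q, ·⟩ is chosen, the expected weight satisfies E[max(⟨q,s₁⟩, ⟨q,s₂⟩)] ≥ (1/n)⟨q, 1⟩ + (1/(2n³))·‖q_{⊥K}‖ for every q ∈ R_+^{n×n}. -/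
open scoped BigOperators
open Finset

noncomputable section

/-! Let `w = doubleCenter q`. Matrices in `spanS n` have the same weight on every permutation,
so `⟨q, s₁⟩ - ⟨q, s₂⟩ = ⟨w, s₁⟩ - ⟨w, s₂⟩`, and since `∑ σ, ⟨w, σ⟩ = 0` the mean of
`|⟨q, s₁⟩ - ⟨q, s₂⟩|` is at least the mean of `|⟨w, s⟩|`. Because the margins of `w` vanish, the
permutations with `σ i = j` have total `w`-weight `(#{σ | σ i = j} + N) * w i j` for some `N ≥ 0`,
hence the mean of `|⟨w, s⟩|` dominates `|w i j| / n` for every entry. On the other hand, if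
`|w i j| ≤ δ` everywhere then `q - w + δ • 1` lies in the cone `K`, which bounds the distance
from `q` to `K` by `n² δ`. -/

section Frobenius

variable {n : ℕ}

lemma frob_add_left (x y z : Fin n → Fin n → ℝ) : frob (x + y) z = frob x z + frob y z := by
  simp only [frob, Pi.add_apply, add_mul, sum_add_distrib]

lemma frob_smul_left (c : ℝ) (x z : Fin n → Fin n → ℝ) : frob (c • x) z = c * frob x z := by
  simp only [frob, Pi.smul_apply, smul_eq_mul, mul_sum, mul_assoc]

lemma frob_permMat (x : Fin n → Fin n → ℝ) (σ : Equiv.Perm (Fin n)) :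
    frob x (permMat σ) = ∑ i, x i (σ i) := by
  simp [frob, permMat]

lemma frob_rowMat_permMat (a : Fin n) (σ : Equiv.Perm (Fin n)) :
    frob (rowMat a) (permMat σ) = 1 := by
  simp [frob_permMat, rowMat]

lemma frob_colMat_permMat (b : Fin n) (σ : Equiv.Perm (Fin n)) :
    frob (colMat b) (permMat σ) = 1 := by
  simp only [frob_permMat, colMat]
  rw [Equiv.sum_comp σ (fun j => if j = b then (1 : ℝ) else 0)]
  simp

lemma frob_permMat_eq_of_mem_spanS {x : Fin n → Fin n → ℝ} (hx : x ∈ spanS n)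
    (σ τ : Equiv.Perm (Fin n)) : frob x (permMat σ) = frob x (permMat τ) := by
  induction hx using Submodule.span_induction with
  | mem y hy =>
    rcases hy with ⟨a, rfl⟩ | ⟨b, rfl⟩
    · rw [frob_rowMat_permMat, frob_rowMat_permMat]
    · rw [frob_colMat_permMat, frob_colMat_permMat]
  | zero => simp [frob]
  | add y z _ _ hy hz => rw [frob_add_left, frob_add_left, hy, hz]
  | smul c y _ hy => rw [frob_smul_left, frob_smul_left, hy]

lemma mem_spanS_of_eq_add (c d : Fin n → ℝ) : (fun i j => c i + d j) ∈ spanS n := by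
  have h : (fun i j => c i + d j) = (∑ a, c a • rowMat a) + ∑ b, d b • colMat b := by
    ext i j
    simp [rowMat, colMat]
  rw [h]
  refine add_mem (sum_mem fun a _ => Submodule.smul_mem _ _ ?_)
    (sum_mem fun b _ => Submodule.smul_mem _ _ ?_)
  · exact Submodule.subset_span (Or.inl ⟨a, rfl⟩)
  · exact Submodule.subset_span (Or.inr ⟨b, rfl⟩)

lemma frob_le_of_abs_le {x : Fin n → Fin n → ℝ} {c : ℝ} (hx : ∀ i j, |x i j| ≤ c) :
    frob x x ≤ n ^ 2 * c ^ 2 := by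
  calc frob x x ≤ ∑ _i : Fin n, ∑ _j : Fin n, c ^ 2 :=
        sum_le_sum fun i _ => sum_le_sum fun j _ => by
          rw [← sq, ← sq_abs]
          exact pow_le_pow_left₀ (abs_nonneg _) (hx i j) 2
    _ = n ^ 2 * c ^ 2 := by simp only [sum_const, card_univ, Fintype.card_fin, nsmul_eq_mul]; ring

lemma fnorm_le_of_abs_le {x : Fin n → Fin n → ℝ} {c : ℝ} (hc : 0 ≤ c)
    (hx : ∀ i j, |x i j| ≤ c) : fnorm x ≤ n * c :=
  (Real.sqrt_le_left (by positivity)).2 ((frob_le_of_abs_le hx).trans_eq (by ring))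

end Frobenius

section DoubleCentering

variable {n : ℕ}

-- `q - doubleCenter q` is the orthogonal projection of `q` onto `spanS n`.
def doubleCenter (q : Fin n → Fin n → ℝ) : Fin n → Fin n → ℝ := fun i j =>
  q i j - (∑ b, q i b) / n - (∑ a, q a j) / n + (∑ a, ∑ b, q a b) / n ^ 2

lemma sum_doubleCenter_row (q : Fin n → Fin n → ℝ) (i : Fin n) :
    ∑ j, doubleCenter q i j = 0 := by
  rcases n.eq_zero_or_pos with rfl | hn
  · simp
  simp only [doubleCenter, sum_add_distrib, sum_sub_distrib, sum_const, card_univ,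
    Fintype.card_fin, nsmul_eq_mul, ← sum_div]
  rw [sum_comm (f := fun a b => q a b)]
  field_simp
  ring

lemma sum_doubleCenter_col (q : Fin n → Fin n → ℝ) (j : Fin n) :
    ∑ i, doubleCenter q i j = 0 := by
  rcases n.eq_zero_or_pos with rfl | hn
  · simp
  simp only [doubleCenter, sum_add_distrib, sum_sub_distrib, sum_const, card_univ,
    Fintype.card_fin, nsmul_eq_mul, ← sum_div]
  field_simp
  ring

lemma sub_doubleCenter_mem_spanS (q : Fin n → Fin n → ℝ) : q - doubleCenter q ∈ spanS n := by
  convert mem_spanS_of_eq_add (fun i => (∑ b, q i b) / n - (∑ a, ∑ b, q a b) / n ^ 2)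
    (fun j => (∑ a, q a j) / n) using 1
  ext i j
  simp only [Pi.sub_apply, doubleCenter]
  ring

lemma frob_sub_frob_permMat_doubleCenter (q : Fin n → Fin n → ℝ) (σ τ : Equiv.Perm (Fin n)) :
    frob q (permMat σ) - frob q (permMat τ)
      = frob (doubleCenter q) (permMat σ) - frob (doubleCenter q) (permMat τ) := by
  have h := frob_permMat_eq_of_mem_spanS (sub_doubleCenter_mem_spanS q) σ τ
  have split (ρ : Equiv.Perm (Fin n)) : frob q (permMat ρ)
      = frob (q - doubleCenter q) (permMat ρ) + frob (doubleCenter q) (permMat ρ) := by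
    rw [← frob_add_left, sub_add_cancel]
  rw [split σ, split τ, h]
  ring

end DoubleCentering

section PermCounting

variable {α : Type*} [Fintype α] [DecidableEq α]

lemma card_filter_apply_eq_congr (a b b' : α) :
    #{σ : Equiv.Perm α | σ a = b} = #{σ : Equiv.Perm α | σ a = b'} :=
  card_equiv (Equiv.mulLeft (Equiv.swap b b')) fun σ => by
    simp [Equiv.swap_apply_eq_iff]

lemma card_filter_apply_eq_mul_card (a b : α) :
    #{σ : Equiv.Perm α | σ a = b} * Fintype.card α = (Fintype.card α).factorial := by
  have h := card_eq_sum_card_fiberwise (f := fun σ : Equiv.Perm α => σ a) (s := univ)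
    (t := univ) fun σ _ => mem_univ _
  rw [card_univ, Fintype.card_perm] at h
  rw [h, sum_congr rfl fun b' _ => card_filter_apply_eq_congr a b' b, sum_const, card_univ,
    smul_eq_mul, mul_comm]

lemma card_filter_apply_eq_and_congr {i j a b a' b' : α} (ha : a ≠ i) (hb : b ≠ j)
    (ha' : a' ≠ i) (hb' : b' ≠ j) :
    #{σ : Equiv.Perm α | σ i = j ∧ σ a = b} = #{σ : Equiv.Perm α | σ i = j ∧ σ a' = b'} :=
  card_equiv ((Equiv.mulLeft (Equiv.swap b b')).trans (Equiv.mulRight (Equiv.swap a a')))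
    fun σ => by
      simp [Equiv.swap_apply_eq_iff, Equiv.swap_apply_of_ne_of_ne, ha.symm, ha'.symm, hb.symm,
        hb'.symm]

lemma exists_card_filter_apply_eq_and (i j : α) : ∃ N : ℕ, ∀ a b,
    #{σ : Equiv.Perm α | σ i = j ∧ σ a = b}
      = if a = i then (if b = j then #{σ : Equiv.Perm α | σ i = j} else 0)
        else (if b = j then 0 else N) := by
  obtain ⟨N, hN⟩ : ∃ N : ℕ, ∀ a b, a ≠ i → b ≠ j →
      #{σ : Equiv.Perm α | σ i = j ∧ σ a = b} = N := by
    by_cases h : ∃ a' b', a' ≠ i ∧ b' ≠ j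
    · obtain ⟨a', b', ha', hb'⟩ := h
      exact ⟨_, fun a b ha hb => card_filter_apply_eq_and_congr ha hb ha' hb'⟩
    · push Not at h
      exact ⟨0, fun a b ha hb => absurd (h a b ha) hb⟩
  refine ⟨N, fun a b => ?_⟩
  split_ifs with ha hb hb
  · subst ha hb
    simp only [and_self]
  · subst ha
    simp only [card_eq_zero, filter_eq_empty_iff]
    exact fun σ _ h => hb (h.2.symm.trans h.1)
  · simp only [card_eq_zero, filter_eq_empty_iff]
    exact fun σ _ h => ha (σ.injective (h.2.trans (hb ▸ h.1.symm)))
  · exact hN a b ha hb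

end PermCounting

section PermSums

variable {n : ℕ}

lemma sum_frob_permMat (x : Fin n → Fin n → ℝ) (s : Finset (Equiv.Perm (Fin n))) :
    ∑ σ ∈ s, frob x (permMat σ) = ∑ a, ∑ b, x a b * #{σ ∈ s | σ a = b} := by
  simp only [frob, permMat, mul_ite, mul_one, mul_zero]
  rw [sum_comm]
  refine sum_congr rfl fun a _ => ?_
  rw [sum_comm]
  refine sum_congr rfl fun b _ => ?_
  rw [sum_ite, sum_const_zero, add_zero, sum_const, nsmul_eq_mul, mul_comm]

lemma mul_sum_frob_permMat (x : Fin n → Fin n → ℝ) :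
    n * ∑ σ, frob x (permMat σ) = n.factorial * frob x (onesMat n) := by
  rw [sum_frob_permMat]
  simp only [frob, onesMat, mul_one, mul_sum]
  refine sum_congr rfl fun a _ => sum_congr rfl fun b _ => ?_
  have h : (#{σ : Equiv.Perm (Fin n) | σ a = b} : ℝ) * n = n.factorial := by
    exact_mod_cast (Fintype.card_fin n) ▸ card_filter_apply_eq_mul_card a b
  linear_combination x a b * h

lemma sum_frob_permMat_eq_zero {w : Fin n → Fin n → ℝ} (hrow : ∀ i, ∑ j, w i j = 0) :
    ∑ σ, frob w (permMat σ) = 0 := by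
  rw [sum_frob_permMat]
  refine sum_eq_zero fun a _ => ?_
  rw [sum_congr rfl fun b _ => by rw [card_filter_apply_eq_congr a b a], ← sum_mul, hrow,
    zero_mul]

lemma exists_sum_filter_frob_permMat {w : Fin n → Fin n → ℝ} (hrow : ∀ i, ∑ j, w i j = 0)
    (hcol : ∀ j, ∑ i, w i j = 0) (i j : Fin n) :
    ∃ N : ℕ, ∑ σ with σ i = j, frob w (permMat σ)
      = (#{σ : Equiv.Perm (Fin n) | σ i = j} + N) * w i j := by
  obtain ⟨N, hN⟩ := exists_card_filter_apply_eq_and i j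
  refine ⟨N, ?_⟩
  set A := #{σ : Equiv.Perm (Fin n) | σ i = j}
  have hrow_sum (a : Fin n) : ∑ b, w a b * #{σ ∈ {σ : Equiv.Perm (Fin n) | σ i = j} | σ a = b}
      = (if a = i then (A + N) * w i j else 0) - N * w a j := by
    simp only [filter_filter, hN, Nat.cast_ite, Nat.cast_zero]
    split_ifs with ha
    · subst ha
      simp only [mul_ite, mul_zero, sum_ite_eq', mem_univ, if_true]
      ring
    · have hsplit (b : Fin n) : w a b * (if b = j then 0 else (N : ℝ))
          = N * w a b - if b = j then N * w a j else 0 := by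
        split_ifs with hb
        · rw [hb]; ring
        · ring
      simp only [hsplit, sum_sub_distrib, ← mul_sum, hrow, mul_zero, sum_ite_eq', mem_univ,
        if_true, zero_sub]
  rw [sum_frob_permMat, sum_congr rfl fun a _ => hrow_sum a, sum_sub_distrib, ← mul_sum, hcol]
  simp only [sum_ite_eq', mem_univ, if_true, mul_zero, sub_zero]

lemma abs_le_mul_sum_abs_frob_permMat_div {w : Fin n → Fin n → ℝ}
    (hrow : ∀ i, ∑ j, w i j = 0) (hcol : ∀ j, ∑ i, w i j = 0) (i j : Fin n) :
    |w i j| ≤ n * (∑ σ, |frob w (permMat σ)|) / n.factorial := by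
  obtain ⟨N, hN⟩ := exists_sum_filter_frob_permMat hrow hcol i j
  set A := #{σ : Equiv.Perm (Fin n) | σ i = j}
  have hA : (A : ℝ) * n = n.factorial := by
    exact_mod_cast (Fintype.card_fin n) ▸ card_filter_apply_eq_mul_card i j
  rw [le_div_iff₀ (by positivity)]
  calc |w i j| * n.factorial = n * (A * |w i j|) := by rw [← hA]; ring
    _ ≤ n * ((A + N) * |w i j|) := by gcongr; simp
    _ = n * |∑ σ with σ i = j, frob w (permMat σ)| := by
      rw [hN, abs_mul, abs_of_nonneg (by positivity : (0 : ℝ) ≤ A + N)]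
    _ ≤ n * ∑ σ with σ i = j, |frob w (permMat σ)| := by gcongr; exact abs_sum_le_sum_abs _ _
    _ ≤ n * ∑ σ, |frob w (permMat σ)| := by
      gcongr
      exact subset_univ _

end PermSums

section Spread

variable {α : Type*} [Fintype α]

lemma card_mul_sum_abs_le_sum_sum_abs_sub {f : α → ℝ} (hf : ∑ x, f x = 0) :
    Fintype.card α * ∑ x, |f x| ≤ ∑ x, ∑ y, |f x - f y| := by
  rw [mul_sum]
  refine sum_le_sum fun x _ => ?_
  calc Fintype.card α * |f x| = |∑ y, (f x - f y)| := by
        rw [sum_sub_distrib, hf, sum_const, card_univ, nsmul_eq_mul, sub_zero, abs_mul,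
          Nat.abs_cast]
    _ ≤ ∑ y, |f x - f y| := abs_sum_le_sum_abs _ _

lemma sum_sum_max_eq (f : α → ℝ) :
    ∑ x, ∑ y, max (f x) (f y)
      = Fintype.card α * ∑ x, f x + (∑ x, ∑ y, |f x - f y|) / 2 := by
  have hmax (a b : ℝ) : max a b = (a + b) / 2 + |a - b| / 2 := by
    have := two_nsmul_sup_eq_add_add_abs_sub a b
    rw [two_nsmul, abs_sub_comm] at this
    change max a b + max a b = _ at this
    linarith
  simp only [hmax, sum_add_distrib, ← sum_div, sum_const, card_univ, nsmul_eq_mul, mul_sum]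
  ring

end Spread

section Projection

variable {n : ℕ}

lemma fnorm_sub_le_of_isProjOn {q p : Fin n → Fin n → ℝ} (hq : ∀ i j, 0 ≤ q i j)
    (hproj : IsProjOn (coneK n) q p) {δ : ℝ} (hδ0 : 0 ≤ δ)
    (hδ : ∀ i j, |doubleCenter q i j| ≤ δ) : fnorm (q - p) ≤ n ^ 2 * δ := by
  set w := doubleCenter q
  have hconst : (fun _ _ => δ : Fin n → Fin n → ℝ) ∈ spanS n := by
    simpa using mem_spanS_of_eq_add (fun _ => δ) (fun _ => 0)
  have hy : q - w + (fun _ _ => δ) ∈ coneK n := by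
    refine ⟨add_mem (sub_doubleCenter_mem_spanS q) hconst, fun i j => ?_⟩
    have := (le_abs_self _).trans (hδ i j)
    simp only [Pi.add_apply, Pi.sub_apply]
    linarith [hq i j]
  refine (hproj.2 _ hy).trans ?_
  have hqy : q - (q - w + fun _ _ => δ) = fun i j => w i j - δ := by
    ext i j
    simp only [Pi.sub_apply, Pi.add_apply]
    ring
  rw [hqy]
  rcases le_or_gt n 1 with hn | hn
  · have : Subsingleton (Fin n) := Fin.subsingleton_iff_le_one.2 hn
    have hw (i j : Fin n) : w i j = 0 := by
      rw [← sum_doubleCenter_row q i, Fintype.sum_subsingleton _ j]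
    refine (fnorm_le_of_abs_le hδ0 fun i j => by simp [hw, abs_of_nonneg hδ0]).trans ?_
    have : (n : ℝ) ≤ n ^ 2 := by exact_mod_cast Nat.le_self_pow two_ne_zero n
    nlinarith
  · refine (fnorm_le_of_abs_le (c := 2 * δ) (by positivity) fun i j => ?_).trans ?_
    · have := abs_le.1 (hδ i j)
      rw [abs_le]
      constructor <;> linarith
    · have : (2 : ℝ) ≤ n := by exact_mod_cast hn
      nlinarith [mul_nonneg (mul_nonneg (Nat.cast_nonneg n) hδ0) (sub_nonneg.2 this)]

end Projection

/-- Power-of-2 scheduling: the expected weight of the better of two uniformly random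
permutation matrices is at least `(1/n)⟨q,1⟩ + (1/(2n³))‖q_⊥K‖`. -/
theorem stmt9 (n : ℕ) (hn : 0 < n) (q p : Fin n → Fin n → ℝ)
    (hq : ∀ i j, 0 ≤ q i j) (hproj : IsProjOn (coneK n) q p) :
    (1 / ((Nat.factorial n : ℝ)) ^ 2) *
        ∑ σ₁ : Equiv.Perm (Fin n), ∑ σ₂ : Equiv.Perm (Fin n),
          max (frob q (permMat σ₁)) (frob q (permMat σ₂))
      ≥ (1 / (n : ℝ)) * frob q (onesMat n) + (1 / (2 * (n : ℝ) ^ 3)) * fnorm (q - p) := by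
  set X : Equiv.Perm (Fin n) → ℝ := fun σ => frob q (permMat σ)
  set S := ∑ σ, |frob (doubleCenter q) (permMat σ)|
  have hn' : (0 : ℝ) < n := by exact_mod_cast hn
  have hcard : (Fintype.card (Equiv.Perm (Fin n)) : ℝ) = n.factorial := by
    rw [Fintype.card_perm, Fintype.card_fin]
  have hmean : 1 / (n : ℝ) * frob q (onesMat n) = (∑ σ, X σ) / n.factorial := by
    have := mul_sum_frob_permMat q
    field_simp
    linarith
  have hspread : n.factorial * S ≤ ∑ σ₁, ∑ σ₂, |X σ₁ - X σ₂| := by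
    simp only [X, frob_sub_frob_permMat_doubleCenter q, ← hcard]
    exact card_mul_sum_abs_le_sum_sum_abs_sub
      (sum_frob_permMat_eq_zero (sum_doubleCenter_row q))
  have hdist : fnorm (q - p) ≤ n ^ 2 * (n * S / n.factorial) :=
    fnorm_sub_le_of_isProjOn hq hproj (by positivity)
      (abs_le_mul_sum_abs_frob_permMat_div (sum_doubleCenter_row q) (sum_doubleCenter_col q))
  rw [sum_sum_max_eq X, hcard, ge_iff_le, hmean]
  calc (∑ σ, X σ) / n.factorial + 1 / (2 * (n : ℝ) ^ 3) * fnorm (q - p)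
      ≤ (∑ σ, X σ) / n.factorial + 1 / (2 * (n : ℝ) ^ 3) * (n ^ 2 * (n * S / n.factorial)) := by
        gcongr
    _ = (∑ σ, X σ) / n.factorial + n.factorial * S / (2 * n.factorial ^ 2) := by field_simp
    _ ≤ (∑ σ, X σ) / n.factorial + (∑ σ₁, ∑ σ₂, |X σ₁ - X σ₂|) / (2 * n.factorial ^ 2) := by
        gcongr
    _ = _ := by field_simp
end
end
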